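/- Let ω, ω̃, h, h̃, n > 0 with r := ω⁴h² − 14ω²ω̃²hh̃ + ω̃⁴h̃² > 0, let K : ℝ⁶ → ℝ be K(u,v,w,ũ,ṽ,w̃) = (1/(32n))(4ωω̃(vṽ − ww̃) − ω²u² − ω̃²ũ²), and let X : ℝ⁶ → ℝ⁶ be the reduced Hamiltonian vector field X(x) = (2 a × ∇_a K(x), 2 b × ∇_b K(x)) with a = (u,v,w), b = (ũ,ṽ,w̃). Then the equilibrium x₀ = (h, 0, 0, h̃, 0, 0) is Lyapunov stable for the flow of X on the product of spheres S = {x ∈ ℝ⁶ : u² + v² + w² = h², ũ² + ṽ² + w̃² = h̃²}: for every ε > 0 there exists δ > 0 such that every differentiable curve f : [0,∞) → ℝ⁶ with f′(t) = X(f(t)) for all t ≥ 0, f(0) ∈ S and ‖f(0) − x₀‖ < δ satisfies ‖f(t) − x₀‖ < ε for all t ≥ 0. The same holds for x₀ = (−h, 0, 0, −h̃, 0, 0). Thus a superposition of two travelling waves moving in the same direction is stable when r > 0, i.e. when one wave is sufficiently small relative to the other. -/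
import Mathlib


/-!
STATEMENT 19: If `r = ω⁴h² − 14ω²ω̃²hh̃ + ω̃⁴h̃² > 0`, then the relative
equilibria `(h,0,0,h̃,0,0)` and `(−h,0,0,−h̃,0,0)` (superpositions of two
travelling waves moving in the same direction) are Lyapunov stable for the
reduced flow of the quartic integral `K` on the product of spheres `S²_h × S²_h̃`.
-/

noncomputable section

/-- `ℝ⁶` as a pair of vectors `a = (u,v,w)` and `b = (ũ,ṽ,w̃)` in `ℝ³`. -/
abbrev R6 : Type := (Fin 3 → ℝ) × (Fin 3 → ℝ)

/-- The quartic integral `K = (1/(32n))(4ωω̃(vṽ − ww̃) − ω²u² − ω̃²ũ²)`. -/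
noncomputable def Kred (ω ωt nn : ℝ) (x : R6) : ℝ :=
  (1/(32*nn)) * (4*ω*ωt*(x.1 1 * x.2 1 - x.1 2 * x.2 2)
    - ω^2 * (x.1 0)^2 - ωt^2 * (x.2 0)^2)

/-- The gradient of `K` with respect to the first factor `(u, v, w)`. -/
noncomputable def gradA (K : R6 → ℝ) (x : R6) : Fin 3 → ℝ :=
  fun i => fderiv ℝ K x (Pi.single i 1, 0)

/-- The gradient of `K` with respect to the second factor `(ũ, ṽ, w̃)`. -/
noncomputable def gradB (K : R6 → ℝ) (x : R6) : Fin 3 → ℝ :=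
  fun i => fderiv ℝ K x (0, Pi.single i 1)

/-- The reduced Hamiltonian vector field `X(x) = (2 a × ∇ₐK(x), 2 b × ∇_bK(x))`. -/
noncomputable def Xred (ω ωt nn : ℝ) (x : R6) : R6 :=
  ((2:ℝ) • crossProduct x.1 (gradA (Kred ω ωt nn) x),
   (2:ℝ) • crossProduct x.2 (gradB (Kred ω ωt nn) x))

/-- The product of spheres `S²_h × S²_h̃ ⊂ ℝ⁶`. -/
def prodSpheres (h ht : ℝ) : Set R6 :=
  {x : R6 | (x.1 0)^2 + (x.1 1)^2 + (x.1 2)^2 = h^2 ∧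
            (x.2 0)^2 + (x.2 1)^2 + (x.2 2)^2 = ht^2}



/-- coordinate projections -/
noncomputable def pA (i : Fin 3) : R6 →L[ℝ] ℝ :=
  (ContinuousLinearMap.proj i).comp (ContinuousLinearMap.fst ℝ (Fin 3 → ℝ) (Fin 3 → ℝ))
noncomputable def pB (i : Fin 3) : R6 →L[ℝ] ℝ :=
  (ContinuousLinearMap.proj i).comp (ContinuousLinearMap.snd ℝ (Fin 3 → ℝ) (Fin 3 → ℝ))
lemma pA_apply (i : Fin 3) (y : R6) : pA i y = y.1 i := rfl
lemma pB_apply (i : Fin 3) (y : R6) : pB i y = y.2 i := rfl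

noncomputable def DK (ω ωt nn : ℝ) (x : R6) : R6 →L[ℝ] ℝ :=
  (1/(32*nn)) • ((4*ω*ωt) • (x.1 1 • pB 1 + x.2 1 • pA 1 - (x.1 2 • pB 2 + x.2 2 • pA 2))
    - ω^2 • ((2 * x.1 0) • pA 0) - ωt^2 • ((2 * x.2 0) • pB 0))

lemma DK_apply (ω ωt nn : ℝ) (x y : R6) :
    DK ω ωt nn x y = (1/(32*nn)) * ((4*ω*ωt) * (x.1 1 * y.2 1 + x.2 1 * y.1 1
      - (x.1 2 * y.2 2 + x.2 2 * y.1 2)) - ω^2 * (2 * x.1 0 * y.1 0)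
      - ωt^2 * (2 * x.2 0 * y.2 0)) := by
  simp only [DK, ContinuousLinearMap.smul_apply, ContinuousLinearMap.add_apply,
    ContinuousLinearMap.sub_apply, pA_apply, pB_apply, smul_eq_mul]

lemma hasFDerivAt_Kred (ω ωt nn : ℝ) (x : R6) :
    HasFDerivAt (Kred ω ωt nn) (DK ω ωt nn x) x := by
  have hA : ∀ i, HasFDerivAt (fun x : R6 => x.1 i) (pA i) x := fun i => (pA i).hasFDerivAt
  have hB : ∀ i, HasFDerivAt (fun x : R6 => x.2 i) (pB i) x := fun i => (pB i).hasFDerivAt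
  have h4 := ((((((hA 1).mul (hB 1)).sub ((hA 2).mul (hB 2))).const_mul
    (4*ω*ωt)).sub (((hA 0).mul (hA 0)).const_mul (ω^2))).sub
    (((hB 0).mul (hB 0)).const_mul (ωt^2))).const_mul (1/(32*nn))
  have hfun : Kred ω ωt nn = fun x : R6 => (1/(32*nn)) * ((4*ω*ωt)*(x.1 1 * x.2 1 - x.1 2 * x.2 2)
      - ω^2 * (x.1 0 * x.1 0) - ωt^2 * (x.2 0 * x.2 0)) := by
    funext x; unfold Kred; ring
  have hD : DK ω ωt nn x = (1/(32*nn)) • ((4*ω*ωt) • (x.1 1 • pB 1 + x.2 1 • pA 1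
      - (x.1 2 • pB 2 + x.2 2 • pA 2)) - ω^2 • (x.1 0 • pA 0 + x.1 0 • pA 0)
      - ωt^2 • (x.2 0 • pB 0 + x.2 0 • pB 0)) := by
    refine ContinuousLinearMap.ext fun y => ?_
    simp only [DK, ContinuousLinearMap.smul_apply, ContinuousLinearMap.add_apply,
      ContinuousLinearMap.sub_apply, pA_apply, pB_apply, smul_eq_mul]
    ring
  rw [hfun, hD]; exact h4

lemma gradA_Kred (ω ωt nn : ℝ) (x : R6) :
    gradA (Kred ω ωt nn) x = ![(1/(32*nn)) * (-(2*ω^2*x.1 0)),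
      (1/(32*nn)) * (4*ω*ωt*x.2 1), (1/(32*nn)) * (-(4*ω*ωt*x.2 2))] := by
  funext i
  have := (hasFDerivAt_Kred ω ωt nn x).fderiv
  unfold gradA
  rw [this, DK_apply]
  fin_cases i <;> simp [Pi.single_apply] <;> (try ring_nf) <;> tauto

lemma gradB_Kred (ω ωt nn : ℝ) (x : R6) :
    gradB (Kred ω ωt nn) x = ![(1/(32*nn)) * (-(2*ωt^2*x.2 0)),
      (1/(32*nn)) * (4*ω*ωt*x.1 1), (1/(32*nn)) * (-(4*ω*ωt*x.1 2))] := by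
  funext i
  have := (hasFDerivAt_Kred ω ωt nn x).fderiv
  unfold gradB
  rw [this, DK_apply]
  fin_cases i <;> simp [Pi.single_apply] <;> (try ring_nf) <;> tauto

lemma Xred_eq (ω ωt nn : ℝ) (x : R6) :
    Xred ω ωt nn x =
      (![(1/(16*nn)) * (-(4*ω*ωt)*(x.1 1 * x.2 2 + x.1 2 * x.2 1)),
         (1/(16*nn)) * (-(2*ω^2) * x.1 0 * x.1 2 + 4*ω*ωt* x.1 0 * x.2 2),
         (1/(16*nn)) * (4*ω*ωt* x.1 0 * x.2 1 + 2*ω^2 * x.1 0 * x.1 1)],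
       ![(1/(16*nn)) * (-(4*ω*ωt)*(x.2 1 * x.1 2 + x.2 2 * x.1 1)),
         (1/(16*nn)) * (-(2*ωt^2) * x.2 0 * x.2 2 + 4*ω*ωt* x.2 0 * x.1 2),
         (1/(16*nn)) * (4*ω*ωt* x.2 0 * x.1 1 + 2*ωt^2 * x.2 0 * x.2 1)]) := by
  unfold Xred
  rw [gradA_Kred, gradB_Kred]
  refine Prod.ext ?_ ?_ <;> funext i <;> fin_cases i <;>
    simp [crossProduct, Pi.smul_apply] <;> ring

/-! ### Conserved quantities -/

/-- `|a|²` -/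
noncomputable def NA (x : R6) : ℝ := (x.1 0)^2 + (x.1 1)^2 + (x.1 2)^2
/-- `|b|²` -/
noncomputable def NB (x : R6) : ℝ := (x.2 0)^2 + (x.2 1)^2 + (x.2 2)^2
/-- The Lyapunov function (shifted so that its value at the equilibrium is `0`). -/
noncomputable def Vfun (ω ωt h ht s : ℝ) (x : R6) : ℝ :=
  4*ω*ωt*(x.1 1 * x.2 1 - x.1 2 * x.2 2) - ω^2 * (x.1 0)^2 - ωt^2 * (x.2 0)^2
    + s*(ω^2*h - ωt^2*ht)*(x.1 0 - x.2 0) + ω^2*h^2 + ωt^2*ht^2 - (ω^2*h - ωt^2*ht)*(h - ht)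

noncomputable def DNA (x : R6) : R6 →L[ℝ] ℝ :=
  (2 * x.1 0) • pA 0 + (2 * x.1 1) • pA 1 + (2 * x.1 2) • pA 2
noncomputable def DNB (x : R6) : R6 →L[ℝ] ℝ :=
  (2 * x.2 0) • pB 0 + (2 * x.2 1) • pB 1 + (2 * x.2 2) • pB 2
noncomputable def DV (ω ωt h ht s : ℝ) (x : R6) : R6 →L[ℝ] ℝ :=
  (4*ω*ωt) • (x.1 1 • pB 1 + x.2 1 • pA 1 - (x.1 2 • pB 2 + x.2 2 • pA 2))
    - ω^2 • ((2 * x.1 0) • pA 0) - ωt^2 • ((2 * x.2 0) • pB 0)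
    + (s*(ω^2*h - ωt^2*ht)) • (pA 0 - pB 0)

lemma hasFDerivAt_NA (x : R6) : HasFDerivAt NA (DNA x) x := by
  have hA : ∀ i, HasFDerivAt (fun x : R6 => x.1 i) (pA i) x := fun i => (pA i).hasFDerivAt
  have h := (((hA 0).mul (hA 0)).add ((hA 1).mul (hA 1))).add ((hA 2).mul (hA 2))
  have hfun : NA = fun x : R6 => x.1 0 * x.1 0 + x.1 1 * x.1 1 + x.1 2 * x.1 2 := by
    funext x; unfold NA; ring
  have hD : DNA x = (x.1 0 • pA 0 + x.1 0 • pA 0 + (x.1 1 • pA 1 + x.1 1 • pA 1))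
      + (x.1 2 • pA 2 + x.1 2 • pA 2) := by
    refine ContinuousLinearMap.ext fun y => ?_
    simp only [DNA, ContinuousLinearMap.smul_apply, ContinuousLinearMap.add_apply,
      pA_apply, smul_eq_mul]
    ring
  rw [hfun, hD]; exact h

lemma hasFDerivAt_NB (x : R6) : HasFDerivAt NB (DNB x) x := by
  have hB : ∀ i, HasFDerivAt (fun x : R6 => x.2 i) (pB i) x := fun i => (pB i).hasFDerivAt
  have h := (((hB 0).mul (hB 0)).add ((hB 1).mul (hB 1))).add ((hB 2).mul (hB 2))
  have hfun : NB = fun x : R6 => x.2 0 * x.2 0 + x.2 1 * x.2 1 + x.2 2 * x.2 2 := by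
    funext x; unfold NB; ring
  have hD : DNB x = (x.2 0 • pB 0 + x.2 0 • pB 0 + (x.2 1 • pB 1 + x.2 1 • pB 1))
      + (x.2 2 • pB 2 + x.2 2 • pB 2) := by
    refine ContinuousLinearMap.ext fun y => ?_
    simp only [DNB, ContinuousLinearMap.smul_apply, ContinuousLinearMap.add_apply,
      pB_apply, smul_eq_mul]
    ring
  rw [hfun, hD]; exact h

lemma hasFDerivAt_Vfun (ω ωt h ht s : ℝ) (x : R6) :
    HasFDerivAt (Vfun ω ωt h ht s) (DV ω ωt h ht s x) x := by
  have hA : ∀ i, HasFDerivAt (fun x : R6 => x.1 i) (pA i) x := fun i => (pA i).hasFDerivAt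
  have hB : ∀ i, HasFDerivAt (fun x : R6 => x.2 i) (pB i) x := fun i => (pB i).hasFDerivAt
  have h1 := ((((hA 1).mul (hB 1)).sub ((hA 2).mul (hB 2))).const_mul (4*ω*ωt)).sub
      (((hA 0).mul (hA 0)).const_mul (ω^2))
  have h2 := h1.sub (((hB 0).mul (hB 0)).const_mul (ωt^2))
  have h3 := h2.add (((hA 0).sub (hB 0)).const_mul (s*(ω^2*h - ωt^2*ht)))
  have h4 := h3.add_const (ω^2*h^2 + ωt^2*ht^2 - (ω^2*h - ωt^2*ht)*(h - ht))
  have hfun : Vfun ω ωt h ht s = fun x : R6 =>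
      ((4*ω*ωt)*(x.1 1 * x.2 1 - x.1 2 * x.2 2) - ω^2 * (x.1 0 * x.1 0)
       - ωt^2 * (x.2 0 * x.2 0) + (s*(ω^2*h - ωt^2*ht))*(x.1 0 - x.2 0))
      + (ω^2*h^2 + ωt^2*ht^2 - (ω^2*h - ωt^2*ht)*(h - ht)) := by
    funext x; unfold Vfun; ring
  have hD : DV ω ωt h ht s x = ((4*ω*ωt) • (x.1 1 • pB 1 + x.2 1 • pA 1
      - (x.1 2 • pB 2 + x.2 2 • pA 2)) - ω^2 • (x.1 0 • pA 0 + x.1 0 • pA 0)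
      - ωt^2 • (x.2 0 • pB 0 + x.2 0 • pB 0)) + (s*(ω^2*h - ωt^2*ht)) • (pA 0 - pB 0) := by
    refine ContinuousLinearMap.ext fun y => ?_
    simp only [DV, ContinuousLinearMap.smul_apply, ContinuousLinearMap.add_apply,
      ContinuousLinearMap.sub_apply, pA_apply, pB_apply, smul_eq_mul]
    ring
  rw [hfun, hD]; exact h4

lemma DNA_Xred (ω ωt nn : ℝ) (x : R6) : DNA x (Xred ω ωt nn x) = 0 := by
  rw [Xred_eq]
  simp only [DNA, ContinuousLinearMap.smul_apply, ContinuousLinearMap.add_apply,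
    pA_apply, pB_apply, smul_eq_mul]
  simp
  ring

lemma DNB_Xred (ω ωt nn : ℝ) (x : R6) : DNB x (Xred ω ωt nn x) = 0 := by
  rw [Xred_eq]
  simp only [DNB, ContinuousLinearMap.smul_apply, ContinuousLinearMap.add_apply,
    pA_apply, pB_apply, smul_eq_mul]
  simp
  ring

lemma DV_Xred (ω ωt h ht nn s : ℝ) (x : R6) :
    DV ω ωt h ht s x (Xred ω ωt nn x) = 0 := by
  rw [Xred_eq]
  simp only [DV, ContinuousLinearMap.smul_apply, ContinuousLinearMap.add_apply,
    ContinuousLinearMap.sub_apply, pA_apply, pB_apply, smul_eq_mul]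
  simp
  ring


lemma quad_block (A B c e v vt : ℝ) (hA : 0 ≤ A - e) (hB : 0 ≤ B - e)
    (hAB : 4*c^2 ≤ (A-e)*(B-e)) :
    e*(v^2+vt^2) ≤ A*v^2 + B*vt^2 + 4*c*(v*vt) := by
  rcases eq_or_lt_of_le hA with hA0 | hA0
  · have hc : c = 0 := by nlinarith [sq_nonneg c]
    have hAe : A = e := by linarith
    subst hc; subst hAe
    have := mul_nonneg hB (sq_nonneg vt)
    nlinarith [this]
  · nlinarith [sq_nonneg ((A-e)*v + 2*c*vt), mul_nonneg hB (sq_nonneg vt),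
      mul_nonneg hA (sq_nonneg v), mul_pos hA0 hA0]

/-- Core quadratic estimate, with all constants abstract. -/
lemma V_lower_core (h ht ω ωt σ η A' B' ε₀ : ℝ)
    (hh : 0 < h) (hht : 0 < ht) (hσ1η : 0 ≤ σ*(1-η))
    (hA'def : A' = σ*(1-η)/(2*h)) (hB'def : B' = σ*(1-η)/(2*ht))
    (hε₀A : ε₀ ≤ A') (hε₀B : ε₀ ≤ B')
    (hABprod : 4*(ω*ωt)^2 ≤ (A'-ε₀)*(B'-ε₀))
    (p q v w vt wt : ℝ) (hp : 0 ≤ p) (hq : 0 ≤ q)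
    (hpc : p*(2*h-p) = v^2+w^2) (hqc : q*(2*ht-q) = vt^2+wt^2)
    (hpσ : ω^2*p ≤ η*σ) (hqσ : ωt^2*q ≤ η*σ) :
    ε₀*(v^2+w^2+vt^2+wt^2) ≤ σ*p - ω^2*p^2 + σ*q - ωt^2*q^2 + 4*ω*ωt*(v*vt - w*wt) := by
  have step1p : σ*(1-η)*p ≤ σ*p - ω^2*p^2 := by
    have h0 := mul_nonneg hp (sub_nonneg.mpr hpσ)
    have h1 : p*(η*σ - ω^2*p) = η*σ*p - ω^2*p^2 := by ring
    rw [h1] at h0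
    nlinarith [h0]
  have step1q : σ*(1-η)*q ≤ σ*q - ωt^2*q^2 := by
    have h0 := mul_nonneg hq (sub_nonneg.mpr hqσ)
    have h1 : q*(η*σ - ωt^2*q) = η*σ*q - ωt^2*q^2 := by ring
    rw [h1] at h0
    nlinarith [h0]
  have hvw : v^2+w^2 ≤ 2*h*p := by nlinarith [sq_nonneg p, hpc]
  have hvtwt : vt^2+wt^2 ≤ 2*ht*q := by nlinarith [sq_nonneg q, hqc]
  have hkeyA : A'*(2*h) = σ*(1-η) := by rw [hA'def]; field_simp
  have hkeyB : B'*(2*ht) = σ*(1-η) := by rw [hB'def]; field_simp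
  have hA'0 : 0 ≤ A' := by rw [hA'def]; positivity
  have hB'0 : 0 ≤ B' := by rw [hB'def]; positivity
  have step2p : A'*(v^2+w^2) ≤ σ*(1-η)*p := by
    have h1 := mul_le_mul_of_nonneg_left hvw hA'0
    have h2 : A'*(2*h*p) = (σ*(1-η))*p := by rw [← hkeyA]; ring
    linarith
  have step2q : B'*(vt^2+wt^2) ≤ σ*(1-η)*q := by
    have h1 := mul_le_mul_of_nonneg_left hvtwt hB'0
    have h2 : B'*(2*ht*q) = (σ*(1-η))*q := by rw [← hkeyB]; ring
    linarith
  have hbv := quad_block A' B' (ω*ωt) ε₀ v vt (by linarith) (by linarith) hABprod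
  have hbw := quad_block A' B' (-(ω*ωt)) ε₀ w wt (by linarith) (by linarith)
    (by have : 4*(-(ω*ωt))^2 = 4*(ω*ωt)^2 := by ring
        linarith)
  linarith [hbv, hbw, step1p, step1q, step2p, step2q]

lemma V_lower (ω ωt h ht : ℝ) (hω : 0 < ω) (hωt : 0 < ωt) (hh : 0 < h) (hht : 0 < ht)
    (hr : 0 < ω^4*h^2 - 14*ω^2*ωt^2*h*ht + ωt^4*ht^2) :
    ∃ ε₀ > 0, ∃ ρ > 0, ∀ p q v w vt wt : ℝ, 0 ≤ p → 0 ≤ q →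
      p*(2*h-p) = v^2+w^2 → q*(2*ht-q) = vt^2+wt^2 → p ≤ ρ → q ≤ ρ →
      ε₀ * (v^2+w^2+vt^2+wt^2) ≤
        (ω^2*h+ωt^2*ht)*p - ω^2*p^2 + (ω^2*h+ωt^2*ht)*q - ωt^2*q^2
          + 4*ω*ωt*(v*vt - w*wt) := by
  obtain ⟨r, hrdef⟩ : ∃ r, r = ω^4*h^2 - 14*ω^2*ωt^2*h*ht + ωt^4*ht^2 := ⟨_, rfl⟩
  rw [← hrdef] at hr
  obtain ⟨σ, hσdef⟩ : ∃ σ, σ = ω^2*h + ωt^2*ht := ⟨_, rfl⟩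
  have hσ : 0 < σ := by rw [hσdef]; positivity
  have hσ2 : σ^2 = r + 16*ω^2*ωt^2*h*ht := by rw [hσdef, hrdef]; ring
  have h16 : 0 < 16*ω^2*ωt^2*h*ht := by positivity
  obtain ⟨η, hηdef⟩ : ∃ η, η = r/(4*σ^2) := ⟨_, rfl⟩
  have hη : 0 < η := by rw [hηdef]; exact div_pos hr (by positivity)
  have hη4 : η ≤ 1/4 := by
    rw [hηdef, div_le_iff₀ (by positivity)]
    linarith
  have h1η : 0 < 1 - η := by linarith
  obtain ⟨ρ, hρdef⟩ : ∃ ρ, ρ = η*σ/(ω^2+ωt^2) := ⟨_, rfl⟩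
  have hρ : 0 < ρ := by rw [hρdef]; exact div_pos (by positivity) (by positivity)
  obtain ⟨A', hA'def⟩ : ∃ A', A' = σ*(1-η)/(2*h) := ⟨_, rfl⟩
  obtain ⟨B', hB'def⟩ : ∃ B', B' = σ*(1-η)/(2*ht) := ⟨_, rfl⟩
  have hA' : 0 < A' := by rw [hA'def]; exact div_pos (by positivity) (by positivity)
  have hB' : 0 < B' := by rw [hB'def]; exact div_pos (by positivity) (by positivity)
  obtain ⟨ε₀, hε₀def⟩ : ∃ ε₀, ε₀ = min A' (min B' ((r/(8*h*ht))/(A'+B'))) := ⟨_, rfl⟩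
  have hε₀ : 0 < ε₀ := by
    rw [hε₀def]
    refine lt_min hA' (lt_min hB' ?_)
    exact div_pos (div_pos hr (by positivity)) (by linarith)
  refine ⟨ε₀, hε₀, ρ, hρ, ?_⟩
  intro p q v w vt wt hp hq hpc hqc hpρ hqρ
  have hε₀A : ε₀ ≤ A' := hε₀def ▸ min_le_left _ _
  have hε₀B : ε₀ ≤ B' := hε₀def ▸ (min_le_right _ _).trans (min_le_left _ _)
  have hε₀C : ε₀*(A'+B') ≤ r/(8*h*ht) := by
    have h1 : ε₀ ≤ (r/(8*h*ht))/(A'+B') :=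
      hε₀def ▸ (min_le_right _ _).trans (min_le_right _ _)
    rw [le_div_iff₀ (by linarith)] at h1
    linarith
  have hABprod : 4*(ω*ωt)^2 ≤ (A'-ε₀)*(B'-ε₀) := by
    have e1 : A'*B'*(4*h*ht) = σ^2*(1-η)^2 := by
      rw [hA'def, hB'def]; field_simp; ring
    have e2 : 2*η*σ^2 = r/2 := by rw [hηdef]; field_simp; ring
    have e3 : σ^2*(1-η)^2 = σ^2 - 2*η*σ^2 + (η*σ)^2 := by ring
    have e5 : (r/(8*h*ht))*(4*h*ht) = r/2 := by field_simp; ring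
    have e6 : (A'-ε₀)*(B'-ε₀)*(4*h*ht)
        = A'*B'*(4*h*ht) - (ε₀*(A'+B'))*(4*h*ht) + ε₀^2*(4*h*ht) := by ring
    have h8 := mul_le_mul_of_nonneg_right hε₀C (show (0:ℝ) ≤ 4*h*ht by positivity)
    rw [e5] at h8
    have hsq : 0 ≤ (η*σ)^2 := sq_nonneg _
    have hsq2 : 0 ≤ ε₀^2*(4*h*ht) := by positivity
    have e7 : 4*(ω*ωt)^2*(4*h*ht) ≤ (A'-ε₀)*(B'-ε₀)*(4*h*ht) := by
      have hee : 4*(ω*ωt)^2*(4*h*ht) = 16*ω^2*ωt^2*h*ht := by ring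
      linarith
    exact le_of_mul_le_mul_right e7 (by positivity)
  have k1 : ρ*(ω^2+ωt^2) = η*σ := by rw [hρdef]; field_simp
  have hpσ : ω^2*p ≤ η*σ := by
    have k2 : ω^2*p ≤ ω^2*ρ := mul_le_mul_of_nonneg_left hpρ (sq_nonneg ω)
    have k3 : 0 ≤ ρ*ωt^2 := by positivity
    linarith [k1, k2, k3]
  have hqσ : ωt^2*q ≤ η*σ := by
    have k2 : ωt^2*q ≤ ωt^2*ρ := mul_le_mul_of_nonneg_left hqρ (sq_nonneg ωt)
    have k3 : 0 ≤ ρ*ω^2 := by positivity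
    linarith [k1, k2, k3]
  have key := V_lower_core h ht ω ωt σ η A' B' ε₀ hh hht (by positivity) hA'def hB'def
    hε₀A hε₀B hABprod p q v w vt wt hp hq hpc hqc hpσ hqσ
  rw [hσdef] at key
  linarith



lemma conserved_along (F : R6 → R6) {g : R6 → ℝ} {L : R6 → (R6 →L[ℝ] ℝ)}
    (hg : ∀ x, HasFDerivAt g (L x) x) (hz : ∀ x, L x (F x) = 0)
    (f : ℝ → R6) (hf : ∀ t ∈ Set.Ici (0:ℝ), HasDerivWithinAt f (F (f t)) (Set.Ici 0) t)
    {t : ℝ} (ht : 0 ≤ t) : g (f t) = g (f 0) := by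
  have hcont : ContinuousOn (g ∘ f) (Set.Icc 0 t) := fun τ hτ =>
    (hg (f τ)).continuousAt.comp_continuousWithinAt
      (((hf τ hτ.1).continuousWithinAt).mono (fun y hy => hy.1))
  have hderiv : ∀ τ ∈ Set.Ico 0 t, HasDerivWithinAt (g ∘ f) 0 (Set.Ici τ) τ := by
    intro τ hτ
    have h1 := (hg (f τ)).comp_hasDerivWithinAt τ
      ((hf τ hτ.1).mono (Set.Ici_subset_Ici.mpr hτ.1))
    rwa [hz (f τ)] at h1
  exact constant_of_has_deriv_right_zero hcont hderiv t ⟨ht, le_refl t⟩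

lemma aux_nonneg_h_sub (s a h : ℝ) (hh : 0 < h) (e : (s*a)^2 = a^2) (ha : a^2 ≤ h^2) :
    0 ≤ h - s*a := by nlinarith [e, ha, hh]

lemma aux_abs_lt_of_sq_sum (a c S : ℝ) (hc : 0 < c) (hS : a^2 ≤ S) (hlt : S < c^2) :
    |a| < c := by
  rw [abs_lt]; constructor <;> nlinarith

lemma aux_p_lt (p h c vw : ℝ) (hh : 0 < h) (hc : 0 < c) (hch : c ≤ h) (hp0 : 0 ≤ p)
    (hple : p ≤ c) (hpc : p*(2*h - p) = vw) (hvw : vw < c^2) : p < c := by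
  nlinarith [mul_nonneg hp0 (show (0:ℝ) ≤ h - p by linarith)]

lemma coordA_le_norm (y : R6) (i : Fin 3) : |y.1 i| ≤ ‖y‖ := by
  calc |y.1 i| = ‖y.1 i‖ := (Real.norm_eq_abs _).symm
    _ ≤ ‖y.1‖ := norm_le_pi_norm y.1 i
    _ ≤ ‖y‖ := norm_fst_le y

lemma coordB_le_norm (y : R6) (i : Fin 3) : |y.2 i| ≤ ‖y‖ := by
  calc |y.2 i| = ‖y.2 i‖ := (Real.norm_eq_abs _).symm
    _ ≤ ‖y.2‖ := norm_le_pi_norm y.2 i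
    _ ≤ ‖y‖ := norm_snd_le y

lemma norm_lt_of_coords {y : R6} {c : ℝ} (hc : 0 < c)
    (h0 : |y.1 0| < c) (h1 : |y.1 1| < c) (h2 : |y.1 2| < c)
    (h3 : |y.2 0| < c) (h4 : |y.2 1| < c) (h5 : |y.2 2| < c) : ‖y‖ < c := by
  rw [Prod.norm_def]
  refine max_lt ?_ ?_ <;> rw [pi_norm_lt_iff hc] <;> intro i <;> fin_cases i <;>
    rw [Real.norm_eq_abs] <;> assumption


/-- **Corollary 3 of the paper (stability part).** When `r > 0`, a superposition
of two travelling waves moving in the same direction, i.e. the relative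
equilibrium `(h,0,0,h̃,0,0)` or `(−h,0,0,−h̃,0,0)`, is Lyapunov stable for the
reduced flow on the product of spheres (proved in the paper via the Lyapunov
function `32n·K ± 2λhh̃·I`). -/
theorem same_direction_travelling_waves_stable
    (ω ωt h ht nn : ℝ) (hω : 0 < ω) (hωt : 0 < ωt)
    (hh : 0 < h) (hht : 0 < ht) (hn : 0 < nn)
    (hr : 0 < ω^4*h^2 - 14*ω^2*ωt^2*h*ht + ωt^4*ht^2)
    (x₀ : R6)
    (hx₀ : x₀ = (![h, 0, 0], ![ht, 0, 0]) ∨ x₀ = (![-h, 0, 0], ![-ht, 0, 0])) :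
    ∀ ε > 0, ∃ δ > 0, ∀ f : ℝ → R6,
      (∀ t ∈ Set.Ici (0:ℝ), HasDerivWithinAt f (Xred ω ωt nn (f t)) (Set.Ici 0) t) →
      f 0 ∈ prodSpheres h ht → ‖f 0 - x₀‖ < δ →
      ∀ t ∈ Set.Ici (0:ℝ), ‖f t - x₀‖ < ε := by
  intro ε hε
  obtain ⟨s, hs, hx⟩ : ∃ s : ℝ, (s = 1 ∨ s = -1) ∧ x₀ = (![s*h, 0, 0], ![s*ht, 0, 0]) := by
    rcases hx₀ with h0 | h0
    · exact ⟨1, Or.inl rfl, by rw [h0]; norm_num⟩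
    · exact ⟨-1, Or.inr rfl, by rw [h0]; norm_num⟩
  subst hx
  have hs2 : s^2 = 1 := by rcases hs with rfl | rfl <;> norm_num
  have habs : |s| = 1 := by rcases hs with rfl | rfl <;> simp
  set P : R6 := (![s*h, 0, 0], ![s*ht, 0, 0]) with hPdef
  have hP10 : P.1 0 = s*h := rfl
  have hP11 : P.1 1 = 0 := rfl
  have hP12 : P.1 2 = 0 := rfl
  have hP20 : P.2 0 = s*ht := rfl
  have hP21 : P.2 1 = 0 := rfl
  have hP22 : P.2 2 = 0 := rfl
  obtain ⟨ε₀, hε₀, ρ, hρ, Hlow⟩ := V_lower ω ωt h ht hω hωt hh hht hr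
  obtain ⟨ε', hε'def⟩ : ∃ e : ℝ, e = min (min ε ρ) (min h ht) / 2 := ⟨_, rfl⟩
  have hmin1 : min (min ε ρ) (min h ht) ≤ ε := (min_le_left _ _).trans (min_le_left _ _)
  have hmin2 : min (min ε ρ) (min h ht) ≤ ρ := (min_le_left _ _).trans (min_le_right _ _)
  have hmin3 : min (min ε ρ) (min h ht) ≤ h := (min_le_right _ _).trans (min_le_left _ _)
  have hmin4 : min (min ε ρ) (min h ht) ≤ ht := (min_le_right _ _).trans (min_le_right _ _)
  have hminpos : 0 < min (min ε ρ) (min h ht) := lt_min (lt_min hε hρ) (lt_min hh hht)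
  have hε'pos : 0 < ε' := by rw [hε'def]; linarith
  have hε'ε : ε' < ε := by rw [hε'def]; linarith
  have hε'ρ : ε' ≤ ρ := by rw [hε'def]; linarith
  have hε'h : ε' ≤ h := by rw [hε'def]; linarith
  have hε'ht : ε' ≤ ht := by rw [hε'def]; linarith
  -- value of the Lyapunov function at the equilibrium
  have hV0 : Vfun ω ωt h ht s P = 0 := by
    unfold Vfun
    rw [hP10, hP11, hP12, hP20, hP21, hP22]
    rcases hs with rfl | rfl <;> ring
  have hVcont := (hasFDerivAt_Vfun ω ωt h ht s P).continuousAt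
  rw [Metric.continuousAt_iff] at hVcont
  obtain ⟨δ₀, hδ₀pos, hδ₀⟩ := hVcont (ε₀*ε'^2) (by positivity)
  refine ⟨min δ₀ ε', lt_min hδ₀pos hε'pos, ?_⟩
  intro f hf hfS hfδ
  -- conserved quantities along the flow
  have hNAc : ∀ t, 0 ≤ t → NA (f t) = h^2 := by
    intro t ht'
    have hc := conserved_along (Xred ω ωt nn) hasFDerivAt_NA (DNA_Xred ω ωt nn) f hf ht'
    rw [hc]; exact hfS.1
  have hNBc : ∀ t, 0 ≤ t → NB (f t) = ht^2 := by
    intro t ht'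
    have hc := conserved_along (Xred ω ωt nn) hasFDerivAt_NB (DNB_Xred ω ωt nn) f hf ht'
    rw [hc]; exact hfS.2
  have hVc : ∀ t, 0 ≤ t → Vfun ω ωt h ht s (f t) = Vfun ω ωt h ht s (f 0) :=
    fun t ht' => conserved_along (Xred ω ωt nn) (hasFDerivAt_Vfun ω ωt h ht s)
      (DV_Xred ω ωt h ht nn s) f hf ht'
  -- V (f 0) is small
  have hVf0 : |Vfun ω ωt h ht s (f 0)| < ε₀*ε'^2 := by
    have hd : dist (f 0) P < δ₀ := by
      rw [dist_eq_norm]; exact lt_of_lt_of_le hfδ (min_le_left _ _)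
    have := hδ₀ hd
    rwa [Real.dist_eq, hV0, sub_zero] at this
  -- main claim
  suffices hcl : ∀ t ∈ Set.Ici (0:ℝ), ‖f t - P‖ < ε' by
    intro t ht'; exact lt_trans (hcl t ht') hε'ε
  by_contra hcon
  push_neg at hcon
  obtain ⟨t₁, ht₁0, ht₁⟩ := hcon
  have hfcont : ContinuousOn f (Set.Ici 0) := fun τ hτ => (hf τ hτ).continuousWithinAt
  have hgcont : ContinuousOn (fun t => ‖f t - P‖) (Set.Ici 0) :=
    (hfcont.sub continuousOn_const).norm
  have hAclosed : IsClosed (Set.Ici 0 ∩ (fun t => ‖f t - P‖) ⁻¹' (Set.Ici ε')) :=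
    hgcont.preimage_isClosed_of_isClosed isClosed_Ici isClosed_Ici
  have hAne : (Set.Ici 0 ∩ (fun t => ‖f t - P‖) ⁻¹' (Set.Ici ε')).Nonempty :=
    ⟨t₁, ht₁0, ht₁⟩
  have hAbdd : BddBelow (Set.Ici 0 ∩ (fun t => ‖f t - P‖) ⁻¹' (Set.Ici ε')) :=
    ⟨0, fun y hy => hy.1⟩
  obtain ⟨T, hTdef⟩ : ∃ T, T = sInf (Set.Ici 0 ∩ (fun t => ‖f t - P‖) ⁻¹' (Set.Ici ε')) :=
    ⟨_, rfl⟩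
  have hTA : T ∈ Set.Ici 0 ∩ (fun t => ‖f t - P‖) ⁻¹' (Set.Ici ε') := by
    rw [hTdef]; exact hAclosed.csInf_mem hAne hAbdd
  have hT0 : (0:ℝ) ≤ T := hTA.1
  have hTge : ε' ≤ ‖f T - P‖ := hTA.2
  have hTpos : 0 < T := by
    rcases eq_or_lt_of_le hT0 with h0 | h0
    · exfalso
      have h1 : ‖f 0 - P‖ < ε' := lt_of_lt_of_le hfδ (min_le_right _ _)
      rw [← h0] at hTge; linarith
    · exact h0
  have hlt : ∀ τ ∈ Set.Ico (0:ℝ) T, ‖f τ - P‖ < ε' := by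
    intro τ hτ
    by_contra hcon2; push_neg at hcon2
    have hmem : τ ∈ Set.Ici 0 ∩ (fun t => ‖f t - P‖) ⁻¹' (Set.Ici ε') := ⟨hτ.1, hcon2⟩
    have := csInf_le hAbdd hmem
    rw [← hTdef] at this
    linarith [hτ.2]
  have hTle : ‖f T - P‖ ≤ ε' := by
    have hne : (nhdsWithin T (Set.Ico 0 T)).NeBot := by
      rw [← mem_closure_iff_nhdsWithin_neBot, closure_Ico (ne_of_lt hTpos)]
      exact ⟨hT0, le_refl T⟩
    have htd : Filter.Tendsto (fun t => ‖f t - P‖) (nhdsWithin T (Set.Ico 0 T))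
        (nhds ‖f T - P‖) :=
      (hgcont T (Set.mem_Ici.mpr hT0)).mono (fun y hy => hy.1)
    exact le_of_tendsto htd (eventually_mem_nhdsWithin.mono (fun τ hτ => (hlt τ hτ).le))
  -- geometry at time T
  have hsphA : ((f T).1 0)^2 + ((f T).1 1)^2 + ((f T).1 2)^2 = h^2 := hNAc T hT0
  have hsphB : ((f T).2 0)^2 + ((f T).2 1)^2 + ((f T).2 2)^2 = ht^2 := hNBc T hT0
  obtain ⟨p, hpdef⟩ : ∃ p : ℝ, p = h - s*(f T).1 0 := ⟨_, rfl⟩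
  obtain ⟨q, hqdef⟩ : ∃ q : ℝ, q = ht - s*(f T).2 0 := ⟨_, rfl⟩
  have hu2 : ((f T).1 0)^2 ≤ h^2 := by
    linarith [sq_nonneg ((f T).1 1), sq_nonneg ((f T).1 2), hsphA]
  have hut2 : ((f T).2 0)^2 ≤ ht^2 := by
    linarith [sq_nonneg ((f T).2 1), sq_nonneg ((f T).2 2), hsphB]
  have hsu : (s*(f T).1 0)^2 = ((f T).1 0)^2 := by
    rw [mul_pow]; rw [hs2]; ring
  have hsut : (s*(f T).2 0)^2 = ((f T).2 0)^2 := by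
    rw [mul_pow]; rw [hs2]; ring
  have hp0 : 0 ≤ p := by rw [hpdef]; exact aux_nonneg_h_sub s _ h hh hsu hu2
  have hq0 : 0 ≤ q := by rw [hqdef]; exact aux_nonneg_h_sub s _ ht hht hsut hut2
  have hpc : p*(2*h - p) = ((f T).1 1)^2 + ((f T).1 2)^2 := by
    have e1 : p*(2*h - p) = h^2 - ((f T).1 0)^2 := by
      rw [hpdef]; linear_combination (-((f T).1 0)^2) * hs2
    rw [e1]; linarith [hsphA]
  have hqc : q*(2*ht - q) = ((f T).2 1)^2 + ((f T).2 2)^2 := by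
    have e1 : q*(2*ht - q) = ht^2 - ((f T).2 0)^2 := by
      rw [hqdef]; linear_combination (-((f T).2 0)^2) * hs2
    rw [e1]; linarith [hsphB]
  have hpe : |(f T).1 0 - s*h| = p := by
    have e1 : (f T).1 0 - s*h = -(s*p) := by
      rw [hpdef]; linear_combination (-((f T).1 0)) * hs2
    rw [e1, abs_neg, abs_mul, habs, one_mul, abs_of_nonneg hp0]
  have hqe : |(f T).2 0 - s*ht| = q := by
    have e1 : (f T).2 0 - s*ht = -(s*q) := by
      rw [hqdef]; linear_combination (-((f T).2 0)) * hs2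
    rw [e1, abs_neg, abs_mul, habs, one_mul, abs_of_nonneg hq0]
  have hcoordA : ∀ i, (f T - P).1 i = (f T).1 i - P.1 i := fun i => rfl
  have hple : p ≤ ε' := by
    have h1 : |(f T - P).1 0| ≤ ‖f T - P‖ := coordA_le_norm _ 0
    rw [hcoordA, hP10, hpe] at h1
    linarith
  have hqle : q ≤ ε' := by
    have h1 : |(f T - P).2 0| ≤ ‖f T - P‖ := coordB_le_norm _ 0
    have h2 : (f T - P).2 0 = (f T).2 0 - s*ht := rfl
    rw [h2, hqe] at h1
    linarith
  -- lower bound on the sum of squares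
  have hsum : ε'^2 ≤ ((f T).1 1)^2 + ((f T).1 2)^2 + ((f T).2 1)^2 + ((f T).2 2)^2 := by
    by_contra hcon3; push_neg at hcon3
    have hv : |(f T).1 1| < ε' := aux_abs_lt_of_sq_sum _ _ _ hε'pos
      (by linarith [sq_nonneg ((f T).1 2), sq_nonneg ((f T).2 1), sq_nonneg ((f T).2 2)]) hcon3
    have hw : |(f T).1 2| < ε' := aux_abs_lt_of_sq_sum _ _ _ hε'pos
      (by linarith [sq_nonneg ((f T).1 1), sq_nonneg ((f T).2 1), sq_nonneg ((f T).2 2)]) hcon3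
    have hvt : |(f T).2 1| < ε' := aux_abs_lt_of_sq_sum _ _ _ hε'pos
      (by linarith [sq_nonneg ((f T).1 1), sq_nonneg ((f T).1 2), sq_nonneg ((f T).2 2)]) hcon3
    have hwt : |(f T).2 2| < ε' := aux_abs_lt_of_sq_sum _ _ _ hε'pos
      (by linarith [sq_nonneg ((f T).1 1), sq_nonneg ((f T).1 2), sq_nonneg ((f T).2 1)]) hcon3
    have hpl : p < ε' := aux_p_lt p h ε' _ hh hε'pos hε'h hp0 hple hpc
      (by linarith [sq_nonneg ((f T).2 1), sq_nonneg ((f T).2 2)])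
    have hql : q < ε' := aux_p_lt q ht ε' _ hht hε'pos hε'ht hq0 hqle hqc
      (by linarith [sq_nonneg ((f T).1 1), sq_nonneg ((f T).1 2)])
    have hnorm : ‖f T - P‖ < ε' := by
      refine norm_lt_of_coords hε'pos ?_ ?_ ?_ ?_ ?_ ?_
      · show |(f T).1 0 - P.1 0| < ε'; rw [hP10, hpe]; exact hpl
      · show |(f T).1 1 - P.1 1| < ε'; rw [hP11, sub_zero]; exact hv
      · show |(f T).1 2 - P.1 2| < ε'; rw [hP12, sub_zero]; exact hw
      · show |(f T).2 0 - P.2 0| < ε'; rw [hP20, hqe]; exact hql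
      · show |(f T).2 1 - P.2 1| < ε'; rw [hP21, sub_zero]; exact hvt
      · show |(f T).2 2 - P.2 2| < ε'; rw [hP22, sub_zero]; exact hwt
    linarith
  -- the Lyapunov bound at time T
  have hlow := Hlow p q ((f T).1 1) ((f T).1 2) ((f T).2 1) ((f T).2 2) hp0 hq0 hpc hqc
    (le_trans hple hε'ρ) (le_trans hqle hε'ρ)
  have hVT : Vfun ω ωt h ht s (f T) =
      (ω^2*h+ωt^2*ht)*p - ω^2*p^2 + (ω^2*h+ωt^2*ht)*q - ωt^2*q^2
        + 4*ω*ωt*((f T).1 1*(f T).2 1 - (f T).1 2*(f T).2 2) := by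
    unfold Vfun
    rw [hpdef, hqdef]
    rcases hs with rfl | rfl <;> ring
  have final1 : ε₀*ε'^2 ≤ Vfun ω ωt h ht s (f T) := by
    calc ε₀*ε'^2 ≤ ε₀*(((f T).1 1)^2 + ((f T).1 2)^2 + ((f T).2 1)^2 + ((f T).2 2)^2) :=
          mul_le_mul_of_nonneg_left hsum hε₀.le
      _ ≤ _ := hlow
      _ = Vfun ω ωt h ht s (f T) := hVT.symm
  rw [hVc T hT0] at final1
  have := le_abs_self (Vfun ω ωt h ht s (f 0))
  linarith
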